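/- Combining the entropy approximation with Parseval: for a probability distribution f on GF(2)ⁿ with f(i) = 2^{-n} + u_i and 2ⁿ|u_i| ≤ 1/2 for all i, the deficiency from maximal entropy satisfies n - H(f) = (1/(2 log 2)) ∑_{m ≠ 0} f̂(m)² + O(2^{2n} ∑_i |u_i|³). -/

import Mathlib

open Finset

/-- The `(-1)^{⟨i,j⟩}` sign, where `⟨i,j⟩` is the GF(2) inner product. -/
noncomputable def walshChar {n : ℕ} (i j : Fin n → ZMod 2) : ℝ :=
  (-1 : ℝ) ^ ((∑ k, i k * j k : ZMod 2)).val

/-- Walsh transform of `f : GF(2)ⁿ → ℝ`. -/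
noncomputable def walsh {n : ℕ} (f : (Fin n → ZMod 2) → ℝ) (i : Fin n → ZMod 2) : ℝ :=
  ∑ j, walshChar i j * f j

/-- Base-2 Shannon entropy of a distribution on GF(2)ⁿ (with `0 log 0 = 0`,
as guaranteed by `Real.logb`'s junk value `logb 2 0 = 0`). -/
noncomputable def shannonEnt {n : ℕ} (f : (Fin n → ZMod 2) → ℝ) : ℝ :=
  -∑ i, f i * Real.logb 2 (f i)

/-!
Write `f = 2⁻ⁿ (1 + x)` with `x = 2ⁿ u`. Because `∑ f = 1`, the deficiency `n - H(f)` is the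
divergence from the uniform distribution, `2⁻ⁿ ∑ (1 + xᵢ) log₂ (1 + xᵢ)`. On `|y| ≤ 1/2` we have
`(1 + y) log (1 + y) = y + y²/2 + O(|y|³)`, and the linear terms cancel since `∑ xᵢ = 0`. What
remains at second order is `2ⁿ ∑ uᵢ² / (2 log 2)`. By Parseval this equals
`∑_{m ≠ 0} f̂(m)² / (2 log 2)`, because the constant `2⁻ⁿ` only contributes to `f̂(0)` and
`û(0) = ∑ uᵢ = 0`.
-/

lemma pi_zmod_two_add_eq_zero_iff {ι : Type*} (a b : ι → ZMod 2) : a + b = 0 ↔ a = b := by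
  simp [add_eq_zero_iff_eq_neg, funext_iff, ZMod.neg_eq_self_mod_two]

lemma neg_one_pow_val_add {R : Type*} [Ring R] (a b : ZMod 2) :
    (-1 : R) ^ (a + b).val = (-1) ^ a.val * (-1) ^ b.val := by
  rw [ZMod.val_add, ← neg_one_pow_eq_pow_mod_two (R := R), pow_add]

namespace walshChar

variable {n : ℕ}

lemma comm (i j : Fin n → ZMod 2) : walshChar i j = walshChar j i := by
  simp only [walshChar, mul_comm (i _)]

lemma add_left (i i' j : Fin n → ZMod 2) :
    walshChar (i + i') j = walshChar i j * walshChar i' j := by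
  simp only [walshChar, Pi.add_apply, add_mul, sum_add_distrib, neg_one_pow_val_add]

lemma add_right (i j j' : Fin n → ZMod 2) :
    walshChar i (j + j') = walshChar i j * walshChar i j' := by
  rw [comm, add_left, comm j, comm j']

@[simp]
lemma zero_left (j : Fin n → ZMod 2) : walshChar 0 j = 1 := by
  simp [walshChar]

@[simp]
lemma zero_right (i : Fin n → ZMod 2) : walshChar i 0 = 1 := by
  rw [comm, zero_left]

lemma single_one_left (k : Fin n) (j : Fin n → ZMod 2) :
    walshChar (Pi.single k 1) j = (-1) ^ (j k).val := by
  rw [walshChar, Fintype.sum_eq_single k fun k' hk' => by simp [Pi.single_eq_of_ne hk'],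
    Pi.single_eq_same, one_mul]

/-- Translating `m` by the unit vector at a coordinate where `a ≠ 0` flips the sign of
every term. -/
lemma sum_left (a : Fin n → ZMod 2) :
    ∑ m, walshChar m a = if a = 0 then (2 : ℝ) ^ n else 0 := by
  split_ifs with ha
  · subst ha; simp
  obtain ⟨k, hk⟩ := Function.ne_iff.mp ha
  have hak : a k = 1 := (by decide : ∀ t : ZMod 2, t ≠ 0 → t = 1) _ hk
  have hflip : ∀ m, walshChar (m + Pi.single k 1) a = -walshChar m a := fun m => by
    rw [add_left, single_one_left, hak]; simp [ZMod.val_one]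
  have hshift : ∑ m, walshChar (m + Pi.single k 1) a = ∑ m, walshChar m a :=
    Fintype.sum_equiv (Equiv.addRight (Pi.single k 1)) _ _ fun _ => rfl
  simp only [hflip, sum_neg_distrib] at hshift
  linarith

lemma sum_right (i : Fin n → ZMod 2) :
    ∑ j, walshChar i j = if i = 0 then (2 : ℝ) ^ n else 0 := by
  simp_rw [comm i]
  exact sum_left i

end walshChar

section walsh

variable {n : ℕ}

lemma walsh_zero (u : (Fin n → ZMod 2) → ℝ) : walsh u 0 = ∑ j, u j := by
  simp [walsh]

lemma walsh_const_add (c : ℝ) (u : (Fin n → ZMod 2) → ℝ) {m : Fin n → ZMod 2} (hm : m ≠ 0) :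
    walsh (fun j => c + u j) m = walsh u m := by
  simp only [walsh, mul_add, sum_add_distrib, ← sum_mul, walshChar.sum_right, if_neg hm,
    zero_mul, zero_add]

theorem sum_walsh_sq (u : (Fin n → ZMod 2) → ℝ) :
    ∑ m, walsh u m ^ 2 = 2 ^ n * ∑ j, u j ^ 2 := by
  calc ∑ m, walsh u m ^ 2
      = ∑ j, ∑ j', (∑ m, walshChar m (j + j')) * (u j * u j') := by
        have hsq : ∀ m, walsh u m ^ 2 = ∑ j, ∑ j', walshChar m (j + j') * (u j * u j') :=
          fun m => by
            rw [sq, walsh, sum_mul_sum]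
            refine sum_congr rfl fun j _ => sum_congr rfl fun j' _ => ?_
            rw [walshChar.add_right]
            ring
        simp only [hsq, sum_mul]
        rw [sum_comm]
        exact sum_congr rfl fun j _ => sum_comm
    _ = ∑ j, 2 ^ n * u j ^ 2 := by
        simp only [walshChar.sum_left, pi_zmod_two_add_eq_zero_iff, ite_mul, zero_mul,
          sum_ite_eq, mem_univ, if_true, sq]
    _ = 2 ^ n * ∑ j, u j ^ 2 := (mul_sum ..).symm

theorem sum_filter_ne_zero_walsh_sq (u : (Fin n → ZMod 2) → ℝ) :
    ∑ m ∈ univ.filter (· ≠ 0), walsh u m ^ 2 = 2 ^ n * ∑ j, u j ^ 2 - (∑ j, u j) ^ 2 := by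
  rw [filter_ne', sum_erase_eq_sub (mem_univ _), sum_walsh_sq, walsh_zero]

end walsh

theorem sub_shannonEnt_eq_sum_mul_logb {n : ℕ} {f : (Fin n → ZMod 2) → ℝ} (hf : ∑ i, f i = 1) :
    n - shannonEnt f = ∑ i, f i * Real.logb 2 (2 ^ n * f i) := by
  have hterm : ∀ i, f i * Real.logb 2 (2 ^ n * f i) = f i * n + f i * Real.logb 2 (f i) := by
    intro i
    rcases eq_or_ne (f i) 0 with h | h
    · simp [h]
    · rw [Real.logb_mul (by positivity) h, Real.logb_pow, Real.logb_self_eq_one one_lt_two]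
      ring
  rw [shannonEnt, sum_congr rfl fun i _ => hterm i, sum_add_distrib, ← sum_mul, hf]
  ring

lemma abs_log_one_add_sub_le {y : ℝ} (hy : |y| ≤ 1 / 2) :
    |Real.log (1 + y) - (y - y ^ 2 / 2)| ≤ 2 * |y| ^ 3 := by
  have h := Real.abs_log_sub_add_sum_range_le (x := -y) (by rw [abs_neg]; linarith) 2
  simp only [sum_range_succ, sum_range_zero, abs_neg, sub_neg_eq_add] at h
  calc |Real.log (1 + y) - (y - y ^ 2 / 2)| ≤ |y| ^ 3 / (1 - |y|) := by
        convert h using 2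
        push_cast
        ring
    _ ≤ 2 * |y| ^ 3 := by
        rw [div_le_iff₀ (by linarith)]
        nlinarith [pow_nonneg (abs_nonneg y) 3]

lemma abs_one_add_mul_log_one_add_sub_le {y : ℝ} (hy : |y| ≤ 1 / 2) :
    |(1 + y) * Real.log (1 + y) - y - y ^ 2 / 2| ≤ 4 * |y| ^ 3 := by
  have h1y : |1 + y| ≤ 3 / 2 := by
    rw [abs_le] at hy ⊢; constructor <;> linarith
  calc |(1 + y) * Real.log (1 + y) - y - y ^ 2 / 2|
      = |(1 + y) * (Real.log (1 + y) - (y - y ^ 2 / 2)) + (-(y ^ 3 / 2))| := by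
        congr 1; ring
    _ ≤ |1 + y| * |Real.log (1 + y) - (y - y ^ 2 / 2)| + |y| ^ 3 / 2 := by
        grw [abs_add_le, abs_mul, abs_neg, abs_div, abs_pow, abs_two]
    _ ≤ 3 / 2 * (2 * |y| ^ 3) + |y| ^ 3 / 2 := by
        gcongr
        exact abs_log_one_add_sub_le hy
    _ ≤ 4 * |y| ^ 3 := by linarith [pow_nonneg (abs_nonneg y) 3]

lemma abs_mul_logb_sub_le {N u : ℝ} (hN : 0 < N) (hu : N * |u| ≤ 1 / 2) :
    |(N⁻¹ + u) * Real.logb 2 (N * (N⁻¹ + u)) - u / Real.log 2 - N * u ^ 2 / (2 * Real.log 2)|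
      ≤ 4 / Real.log 2 * N ^ 2 * |u| ^ 3 := by
  have hL : 0 < Real.log 2 := Real.log_pos one_lt_two
  have hy : |N * u| ≤ 1 / 2 := by rwa [abs_mul, abs_of_pos hN]
  have key := abs_one_add_mul_log_one_add_sub_le hy
  calc _ = |(1 + N * u) * Real.log (1 + N * u) - N * u - (N * u) ^ 2 / 2| /
          (N * Real.log 2) := by
        rw [← abs_of_pos (mul_pos hN hL), ← abs_div]
        congr 1
        rw [mul_add, mul_inv_cancel₀ hN.ne', Real.logb]
        field_simp
    _ ≤ 4 * |N * u| ^ 3 / (N * Real.log 2) := by gcongr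
    _ = 4 / Real.log 2 * N ^ 2 * |u| ^ 3 := by
        rw [abs_mul, abs_of_pos hN]
        field_simp

/-- Entropy deficiency in terms of Walsh coefficients: for a near-uniform
distribution `f(i) = 2⁻ⁿ + uᵢ` with `2ⁿ|uᵢ| ≤ 1/2`,
`n - H(f) = (1/(2 log 2)) ∑_{m ≠ 0} f̂(m)² + O(2^{2n} ∑ |uᵢ|³)`. -/
theorem entropy_deficiency_walsh (n : ℕ) :
    ∃ c : ℝ, ∀ (f u : (Fin n → ZMod 2) → ℝ),
      (∀ i, f i = ((2 : ℝ) ^ n)⁻¹ + u i) →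
      (∑ i, u i) = 0 →
      (∀ i, (2 : ℝ) ^ n * |u i| ≤ 1 / 2) →
      |(n - shannonEnt f) -
          (1 / (2 * Real.log 2)) *
            ∑ m ∈ univ.filter (· ≠ (0 : Fin n → ZMod 2)), walsh f m ^ 2| ≤
        c * (2 : ℝ) ^ (2 * n) * ∑ i, |u i| ^ 3 := by
  refine ⟨4 / Real.log 2, fun f u hf hu hbound => ?_⟩
  obtain rfl : f = fun i => ((2 : ℝ) ^ n)⁻¹ + u i := funext hf
  have hmass : ∑ i, (((2 : ℝ) ^ n)⁻¹ + u i) = 1 := by simp [sum_add_distrib, hu]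
  have hparseval : ∑ m ∈ univ.filter (· ≠ 0), walsh (fun i => ((2 : ℝ) ^ n)⁻¹ + u i) m ^ 2
      = 2 ^ n * ∑ i, u i ^ 2 := by
    rw [sum_congr rfl fun m hm => by rw [walsh_const_add _ _ (mem_filter.mp hm).2],
      sum_filter_ne_zero_walsh_sq, hu]
    ring
  rw [sub_shannonEnt_eq_sum_mul_logb hmass, hparseval, pow_mul']
  calc _ = |∑ i, ((((2 : ℝ) ^ n)⁻¹ + u i) * Real.logb 2 (2 ^ n * (((2 : ℝ) ^ n)⁻¹ + u i))
            - u i / Real.log 2 - 2 ^ n * u i ^ 2 / (2 * Real.log 2))| := by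
        rw [sum_sub_distrib, sum_sub_distrib, ← sum_div, hu, zero_div, sub_zero, mul_sum,
          mul_sum]
        congr 3
        ext i
        ring
    _ ≤ ∑ i, 4 / Real.log 2 * ((2 : ℝ) ^ n) ^ 2 * |u i| ^ 3 := (abs_sum_le_sum_abs _ _).trans
        (sum_le_sum fun i _ => abs_mul_logb_sub_le (by positivity) (hbound i))
    _ = _ := by rw [mul_sum]
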